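/- arXiv:2407.14092 — 2 statements merged into one kernel-verified Lean document; each statement's English description precedes it below -/
import Mathlib

section
/- Assume Θmax ≤ Δmax. Then every state s = (j, Δ, Θ) with Θ > Δ is never revisited: for every n ≥ 1 and every action sequence β_1,…,β_n, the n-step transition probability from s back to s is zero. In particular, every state outside G is transient under every stationary policy. -/
/-!
Along any positive-probability path the age `Δ` increases by exactly one per step while the
state stays outside `G`: a query resets the lateness to `1 ≤ Δ`, and a capped age
`Δ = Δmax ≥ Θmax ≥ Θ` would put the state in `G`. Reading a path backwards from a state outside
`G`, every earlier state is outside `G` as well, so the age strictly grows along the path and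
the path cannot return to its starting state.
-/

/-- Index set `{1, …, n}` as a subtype of `ℕ`. -/
abbrev Idx (n : ℕ) := {m : ℕ // m ∈ Finset.Icc 1 n}

/-- `min (d + 1) n`, i.e. the successor capped at the maximum value `n`. -/
def succCap (n : ℕ) (d : Idx n) : Idx n :=
  ⟨min (d.1 + 1) n, by
    have := d.2
    simp only [Finset.mem_Icc] at *
    omega⟩

/-- State of the actuation-agent (AA) MDP: `(j, Δ, Θ)` with `j ∈ {1,…,J}` the index of
the usefulness of the last received update, `Δ ∈ {1,…,Δmax}` the age of information and
`Θ ∈ {1,…,Θmax}` the action lateness. -/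
abbrev AAState (J D T : ℕ) := Idx J × Idx D × Idx T

/-- One-step transition probability of the AA MDP.  Under action `β = false` (no query),
`(j, Δ, Θ)` moves to `(j, min(Δ+1, Δmax), min(Θ+1, Θmax))` with probability `1`.
Under `β = true` (raise a query), it moves to `(j, min(Δ+1, Δmax), 1)` with probability
`pe` (erasure) and to `(j', 1, 1)` with probability `(1 - pe) * q j'` for each `j'`.
All other one-step transitions have probability `0`. -/
def AAstep {J D T : ℕ} (pe : ℝ) (q : Idx J → ℝ)
    (s : AAState J D T) (β : Bool) (s' : AAState J D T) : ℝ :=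
  if β then
    (if s'.1 = s.1 ∧ s'.2.1 = succCap D s.2.1 ∧ s'.2.2.1 = 1 then pe else 0) +
    (if s'.2.1.1 = 1 ∧ s'.2.2.1 = 1 then (1 - pe) * q s'.1 else 0)
  else
    if s'.1 = s.1 ∧ s'.2.1 = succCap D s.2.1 ∧ s'.2.2 = succCap T s.2.2 then 1 else 0

/-- `n`-step transition probability of an MDP along a given list of actions:
the sum over all intermediate-state sequences of the products of the
one-step transition probabilities. -/
def nstep {S A : Type*} [Fintype S] [DecidableEq S] (P : S → A → S → ℝ) :
    List A → S → S → ℝ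
  | [], s, s' => if s = s' then 1 else 0
  | a :: as, s, s' => ∑ t, P s a t * nstep P as t s'

/-- The set `G = {(j, Δ, Θ) ∈ S : Θ ≤ Δ}`. -/
def Gset (J D T : ℕ) : Set (AAState J D T) := {s | s.2.2.1 ≤ s.2.1.1}

/-- `n`-step transition probability of the Markov chain induced by a deterministic
stationary policy `π`. -/
def nstepPol {S A : Type*} [Fintype S] [DecidableEq S]
    (P : S → A → S → ℝ) (π : S → A) : ℕ → S → S → ℝ
  | 0, s, s' => if s = s' then 1 else 0
  | n + 1, s, s' => ∑ t, P s (π s) t * nstepPol P π n t s'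

def RisesInto {S A : Type*} (P : S → A → S → ℝ) (B : Set S) (f : S → ℕ) : Prop :=
  ∀ t a u, P t a u ≠ 0 → u ∈ B → t ∈ B ∧ f u = f t + 1

namespace RisesInto

variable {S A : Type*} [Fintype S] [DecidableEq S] {P : S → A → S → ℝ} {B : Set S} {f : S → ℕ}

theorem nstep_ne_zero (h : RisesInto P B f) (as : List A) {t u : S}
    (hne : nstep P as t u ≠ 0) (hu : u ∈ B) : t ∈ B ∧ f u = f t + as.length := by
  induction as generalizing t with
  | nil =>
    obtain rfl : t = u := by simpa [nstep] using hne
    simpa using hu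
  | cons a as ih =>
    obtain ⟨m, -, hm⟩ := Finset.exists_ne_zero_of_sum_ne_zero hne
    obtain ⟨hmB, hfu⟩ := ih (right_ne_zero_of_mul hm)
    obtain ⟨htB, hfm⟩ := h t a m (left_ne_zero_of_mul hm) hmB
    exact ⟨htB, by simp only [List.length_cons]; omega⟩

theorem nstepPol_ne_zero (h : RisesInto P B f) (π : S → A) (n : ℕ) {t u : S}
    (hne : nstepPol P π n t u ≠ 0) (hu : u ∈ B) : t ∈ B ∧ f u = f t + n := by
  induction n generalizing t with
  | zero =>
    obtain rfl : t = u := by simpa [nstepPol] using hne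
    simpa using hu
  | succ n ih =>
    obtain ⟨m, -, hm⟩ := Finset.exists_ne_zero_of_sum_ne_zero hne
    obtain ⟨hmB, hfu⟩ := ih (right_ne_zero_of_mul hm)
    obtain ⟨htB, hfm⟩ := h t (π t) m (left_ne_zero_of_mul hm) hmB
    exact ⟨htB, by omega⟩

theorem nstep_self_eq_zero (h : RisesInto P B f) {s : S} (hs : s ∈ B) {as : List A}
    (has : as ≠ []) : nstep P as s s = 0 := by
  by_contra hne
  have := (h.nstep_ne_zero as hne hs).2
  exact has (List.length_eq_zero_iff.mp (by omega))

theorem nstepPol_self_eq_zero (h : RisesInto P B f) (π : S → A) {s : S} (hs : s ∈ B) {n : ℕ}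
    (hn : n ≠ 0) : nstepPol P π n s s = 0 := by
  by_contra hne
  have := (h.nstepPol_ne_zero π n hne hs).2
  omega

end RisesInto

theorem AAstep_risesInto_compl_Gset {J D T : ℕ} (hTD : T ≤ D) (pe : ℝ) (q : Idx J → ℝ) :
    RisesInto (AAstep pe q) (Gset J D T)ᶜ (fun s => s.2.1.1) := by
  intro t β u hne hu
  simp only [Set.mem_compl_iff, Gset, Set.mem_ofPred_eq, not_le] at hu ⊢
  have huT : u.2.2.1 ≤ T := (Finset.mem_Icc.mp u.2.2.2).2
  have hu1 : 1 ≤ u.2.1.1 := (Finset.mem_Icc.mp u.2.1.2).1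
  cases β with
  | false =>
    simp only [AAstep, Bool.false_eq_true, if_false, ne_eq, ite_eq_right_iff,
      Classical.not_imp] at hne
    obtain ⟨⟨-, hΔ, hΘ⟩, -⟩ := hne
    have eΔ : u.2.1.1 = min (t.2.1.1 + 1) D := congrArg Subtype.val hΔ
    have eΘ : u.2.2.1 = min (t.2.2.1 + 1) T := congrArg Subtype.val hΘ
    omega
  | true =>
    have hΘ : u.2.2.1 ≠ 1 := by omega
    simp [AAstep, hΘ] at hne

theorem outside_G_never_revisited_general {J D T : ℕ} (hTD : T ≤ D) (pe : ℝ) (q : Idx J → ℝ) :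
    (∀ s : AAState J D T, s.2.1.1 < s.2.2.1 →
      ∀ (n : ℕ), 1 ≤ n → ∀ as : List Bool, as.length = n →
        nstep (AAstep pe q) as s s = 0) ∧
    (∀ (π : AAState J D T → Bool) (s : AAState J D T), s.2.1.1 < s.2.2.1 →
      ∀ (n : ℕ), 1 ≤ n → nstepPol (AAstep pe q) π n s s = 0) := by
  have h := AAstep_risesInto_compl_Gset hTD pe q
  refine ⟨fun s hs n hn as hlen => ?_, fun π s hs n hn => ?_⟩
  · exact h.nstep_self_eq_zero (not_le.mpr hs) (by rintro rfl; simp at hlen; omega)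
  · exact h.nstepPol_self_eq_zero π (not_le.mpr hs) (by omega)

/-- Assume `Θmax ≤ Δmax`.  Every state `s = (j, Δ, Θ)` with `Θ > Δ` is never revisited:
for every `n ≥ 1` and every action sequence of length `n`, the `n`-step transition
probability from `s` back to `s` is zero.  In particular, under every stationary
policy the `n`-step return probability of `s` is zero for all `n ≥ 1`, so every state
outside `G` is transient under every stationary policy. -/
theorem outside_G_never_revisited {J D T : ℕ} (hJ : 1 ≤ J) (hD : 1 ≤ D) (hT : 1 ≤ T)
    (hTD : T ≤ D) (pe : ℝ) (hpe : 0 ≤ pe ∧ pe ≤ 1)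
    (q : Idx J → ℝ) (hq0 : ∀ j, 0 ≤ q j) (hqsum : ∑ j, q j = 1) :
    (∀ s : AAState J D T, s.2.1.1 < s.2.2.1 →
      ∀ (n : ℕ), 1 ≤ n → ∀ as : List Bool, as.length = n →
        nstep (AAstep pe q) as s s = 0) ∧
    (∀ (π : AAState J D T → Bool) (s : AAState J D T), s.2.1.1 < s.2.2.1 →
      ∀ (n : ℕ), 1 ≤ n → nstepPol (AAstep pe q) π n s s = 0) :=
  outside_G_never_revisited_general hTD pe q
end

section
/- Assume 0 < p_ε < 1, q_j > 0 for every j ∈ {1,…,J}, and Θmax ≤ Δmax. Then every state of G is accessible from every state of S: for every s ∈ S and every s' ∈ G there exist n ≥ 1 and an action sequence β_1,…,β_n such that the n-step transition probability from s to s' is positive. -/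
/-!
A successful query (probability `(1 - pe) q j > 0`) resets any state to `(j, 1, 1)`. From there,
`Δ - Θ` erased queries (probability `pe > 0` each) raise the age to `Δ - Θ + 1` while keeping
the lateness at `1`, and `Θ - 1` idle steps (probability `1`) then raise both to `(Δ, Θ)`;
`Θ ≤ Δ` is exactly what makes the number of erased queries nonnegative.
-/

section MDP

variable {S A : Type*} [Fintype S] [DecidableEq S] {P : S → A → S → ℝ}

theorem nstep_append (as bs : List A) (s s' : S) :
    nstep P (as ++ bs) s s' = ∑ t, nstep P as s t * nstep P bs t s' := by
  induction as generalizing s with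
  | nil => simp [nstep]
  | cons a as ih =>
    simp only [List.cons_append, nstep, ih, Finset.mul_sum, Finset.sum_mul, mul_assoc]
    exact Finset.sum_comm

theorem nstep_nonneg (hP : ∀ s a s', 0 ≤ P s a s') (as : List A) (s s' : S) :
    0 ≤ nstep P as s s' := by
  induction as generalizing s with
  | nil => unfold nstep; split_ifs <;> norm_num
  | cons a as ih => exact Finset.sum_nonneg fun t _ => mul_nonneg (hP s a t) (ih t)

theorem nstep_cons_pos (hP : ∀ s a s', 0 ≤ P s a s') {a : A} {as : List A} {s t s' : S}
    (hst : 0 < P s a t) (hts' : 0 < nstep P as t s') : 0 < nstep P (a :: as) s s' :=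
  (mul_pos hst hts').trans_le <| Finset.single_le_sum
    (fun u _ => mul_nonneg (hP s a u) (nstep_nonneg hP as u s')) (Finset.mem_univ t)

theorem nstep_append_pos (hP : ∀ s a s', 0 ≤ P s a s') {as bs : List A} {s t s' : S}
    (hst : 0 < nstep P as s t) (hts' : 0 < nstep P bs t s') :
    0 < nstep P (as ++ bs) s s' := by
  rw [nstep_append]
  exact (mul_pos hst hts').trans_le <| Finset.single_le_sum
    (fun u _ => mul_nonneg (nstep_nonneg hP as s u) (nstep_nonneg hP bs u s'))
    (Finset.mem_univ t)

theorem nstep_replicate_iterate_pos (hP : ∀ s a s', 0 ≤ P s a s') {a : A} {g : S → S}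
    (hg : ∀ s, 0 < P s a (g s)) (n : ℕ) (s : S) :
    0 < nstep P (List.replicate n a) s (g^[n] s) := by
  induction n generalizing s with
  | zero => simp [nstep]
  | succ n ih =>
    rw [List.replicate_succ, Function.iterate_succ_apply]
    exact nstep_cons_pos hP (hg s) (ih (g s))

end MDP

theorem succCap_iterate_val (n k : ℕ) (d : Idx n) : ((succCap n)^[k] d).1 = min (d.1 + k) n := by
  induction k with
  | zero => have := (Finset.mem_Icc.mp d.2).2; simp [this]
  | succ k ih => rw [Function.iterate_succ_apply', succCap]; simp only [ih]; omega

section AAstep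

variable {J D T : ℕ} {pe : ℝ} {q : Idx J → ℝ}

theorem AAstep_nonneg (hpe₀ : 0 ≤ pe) (hpe₁ : pe ≤ 1) (hq : ∀ j, 0 ≤ q j)
    (s : AAState J D T) (β : Bool) (s' : AAState J D T) : 0 ≤ AAstep pe q s β s' := by
  have := mul_nonneg (sub_nonneg.mpr hpe₁) (hq s'.1)
  unfold AAstep
  split_ifs <;> linarith

theorem AAstep_query_success_pos (hpe₀ : 0 ≤ pe) (hpe₁ : pe < 1) (s : AAState J D T)
    {j : Idx J} (hq : 0 < q j) (Δ : Idx D) (Θ : Idx T) (hΔ : Δ.1 = 1) (hΘ : Θ.1 = 1) :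
    0 < AAstep pe q s true (j, Δ, Θ) := by
  have := mul_pos (sub_pos.mpr hpe₁) hq
  simp only [AAstep, if_true, hΔ, hΘ, and_self]
  split_ifs <;> linarith

theorem AAstep_query_erased_pos (hpe₀ : 0 < pe) (hpe₁ : pe ≤ 1) (hq : ∀ j, 0 ≤ q j)
    (s : AAState J D T) {Θ : Idx T} (hΘ : Θ.1 = 1) :
    0 < AAstep pe q s true (s.1, succCap D s.2.1, Θ) := by
  have := mul_nonneg (sub_nonneg.mpr hpe₁) (hq s.1)
  simp only [AAstep, if_true, hΘ, and_self]
  split_ifs <;> linarith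

theorem AAstep_idle (s : AAState J D T) :
    AAstep pe q s false (s.1, succCap D s.2.1, succCap T s.2.2) = 1 := by
  simp [AAstep]

end AAstep

theorem G_accessible_general {J D T : ℕ} (pe : ℝ) (hpe : 0 < pe ∧ pe < 1)
    (q : Idx J → ℝ) (hqpos : ∀ j, 0 < q j) :
    ∀ s : AAState J D T, ∀ s' ∈ Gset J D T,
      ∃ (n : ℕ) (as : List Bool), 1 ≤ n ∧ as.length = n ∧
        0 < nstep (AAstep pe q) as s s' := by
  obtain ⟨hpe₀, hpe₁⟩ := hpe
  rintro s ⟨j, Δ, Θ⟩ (hΘΔ : Θ.1 ≤ Δ.1)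
  have hΔ := Finset.mem_Icc.mp Δ.2
  have hΘ := Finset.mem_Icc.mp Θ.2
  let oneD : Idx D := ⟨1, Finset.mem_Icc.mpr ⟨le_rfl, by omega⟩⟩
  let oneT : Idx T := ⟨1, Finset.mem_Icc.mpr ⟨le_rfl, by omega⟩⟩
  let erase : AAState J D T → AAState J D T := Prod.map id (Prod.map (succCap D) fun _ => oneT)
  let idle : AAState J D T → AAState J D T := Prod.map id (Prod.map (succCap D) (succCap T))
  have hq : ∀ j, 0 ≤ q j := fun j => (hqpos j).le
  have hP := AAstep_nonneg (J := J) (D := D) (T := T) hpe₀.le hpe₁.le hq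
  have hpath : idle^[Θ.1 - 1] (erase^[Δ.1 - Θ.1] (j, oneD, oneT)) = (j, Δ, Θ) := by
    simp only [erase, idle, Prod.map_iterate, Function.iterate_id, Prod.map_apply, id,
      Function.iterate_fixed (f := fun _ => oneT) rfl]
    refine Prod.ext rfl (Prod.ext (Subtype.ext ?_) (Subtype.ext ?_)) <;>
      simp only [succCap_iterate_val, oneD, oneT] <;> omega
  refine ⟨_, true :: (List.replicate (Δ.1 - Θ.1) true ++ List.replicate (Θ.1 - 1) false),
    by simp, rfl, ?_⟩
  rw [← hpath]
  refine nstep_cons_pos hP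
    (AAstep_query_success_pos hpe₀.le hpe₁ s (hqpos j) oneD oneT rfl rfl) ?_
  exact nstep_append_pos hP
    (nstep_replicate_iterate_pos hP
      (fun s => AAstep_query_erased_pos hpe₀ hpe₁.le hq s rfl) _ _)
    (nstep_replicate_iterate_pos hP (fun s => zero_lt_one.trans_eq (AAstep_idle s).symm) _ _)

/-- Assume `0 < pe < 1`, `q j > 0` for all `j`, and `Θmax ≤ Δmax`.  Then every state of
`G` is accessible from every state: for all `s ∈ S` and `s' ∈ G` there exist `n ≥ 1`
and an action sequence of length `n` with positive `n`-step transition probability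
from `s` to `s'`. -/
theorem G_accessible {J D T : ℕ} (hJ : 1 ≤ J) (hD : 1 ≤ D) (hT : 1 ≤ T)
    (hTD : T ≤ D) (pe : ℝ) (hpe : 0 < pe ∧ pe < 1)
    (q : Idx J → ℝ) (hqpos : ∀ j, 0 < q j) (hqsum : ∑ j, q j = 1) :
    ∀ s : AAState J D T, ∀ s' ∈ Gset J D T,
      ∃ (n : ℕ) (as : List Bool), 1 ≤ n ∧ as.length = n ∧
        0 < nstep (AAstep pe q) as s s' :=
  G_accessible_general pe hpe q hqpos
end
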